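/- arXiv:2307.03410 — 4 statements merged into one kernel-verified Lean document; each statement's English description precedes it below -/
import Mathlib

section
/- Let {a_m} be a nonnegative real sequence with a_0 ≤ A for some A > 0, and suppose a_m ≤ a_{m-1}(1 - ξ²a_{m-1}/A) + b_m for all m ≥ 1, where b_m ≥ 0 and b_0 = 0, and ξ > 0. Then for every m ≥ 0, a_m ≤ A/(1 + mξ²) + ∑_{k=0}^{m} b_k. -/
/-!
With `f x = x * (1 - s * x / A)` and `s = ξ ^ 2`, the bound `a m ≤ A / u + S` propagates to
`f (a m) ≤ A / (u + s) + S`: on `[0, A / u]` the map `f` stays below `A / (u + s)`, and above any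
`y ≥ 0` it grows at most with slope one, so the excess `S` of `a m` over `A / u` is not enlarged by `f`.
Induction on `m` with `u = 1 + m ξ ^ 2` and `S = ∑_{k ≤ m} b k` gives the theorem.
-/

noncomputable def logistic (A s x : ℝ) : ℝ := x * (1 - s * x / A)

lemma logistic_le_div_add {A u s y : ℝ} (hA : 0 < A) (hu : 0 < u) (hs : 0 ≤ s)
    (hy : 0 ≤ y) (hyA : y ≤ A / u) :
    logistic A s y ≤ A / (u + s) := by
  have huy : u * y ≤ A := by rwa [le_div_iff₀ hu, mul_comm] at hyA
  have hq : 0 ≤ A ^ 2 - s * A * y + (s * y) ^ 2 := by nlinarith [sq_nonneg (A - s * y)]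
  have hlhs : logistic A s y = (A * y - s * y ^ 2) / A := by
    rw [logistic]
    field_simp
  rw [hlhs, div_le_div_iff₀ hA (by positivity)]
  -- A³ - A (u + s) (A y - s y²) = (A - u y) (A² - s A y + s² y²) + u s² y³
  nlinarith [mul_nonneg (sub_nonneg.2 huy) hq,
    mul_nonneg (mul_nonneg hu.le (sq_nonneg s)) (pow_nonneg hy 3)]

lemma logistic_sub_logistic_le {A s x y : ℝ} (hA : 0 ≤ A) (hs : 0 ≤ s) (hy : 0 ≤ y)
    (hyx : y ≤ x) :
    logistic A s x - logistic A s y ≤ x - y := by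
  have hfactor : logistic A s x - logistic A s y = (x - y) * (1 - s / A * (x + y)) := by
    rw [logistic, logistic]
    ring
  rw [hfactor]
  nlinarith [mul_nonneg (sub_nonneg.2 hyx) (mul_nonneg (div_nonneg hs hA) (by linarith : 0 ≤ x + y))]

lemma logistic_le_div_add_of_le_div_add {A u s S x : ℝ} (hA : 0 < A) (hu : 0 < u) (hs : 0 ≤ s)
    (hS : 0 ≤ S) (hx : 0 ≤ x) (hxS : x ≤ A / u + S) :
    logistic A s x ≤ A / (u + s) + S := by
  set y := min x (A / u)
  have hy : 0 ≤ y := le_min hx (by positivity)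
  have hfy := logistic_le_div_add hA hu hs hy (min_le_right x (A / u))
  have hfxy := logistic_sub_logistic_le hA.le hs hy (min_le_left x (A / u))
  have hxy : x ≤ y + S := by
    rw [← min_add_add_right]
    exact le_min (le_add_of_nonneg_right hS) hxS
  linarith

theorem stmt_0_general (a b : ℕ → ℝ) (A ξ : ℝ) (hA : 0 < A)
    (ha : ∀ m, 0 ≤ a m) (hb : ∀ m, 0 ≤ b m) (hb0 : b 0 = 0)
    (ha0 : a 0 ≤ A)
    (hrec : ∀ m : ℕ, 1 ≤ m → a m ≤ a (m - 1) * (1 - ξ ^ 2 * a (m - 1) / A) + b m) :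
    ∀ m : ℕ, a m ≤ A / (1 + (m : ℝ) * ξ ^ 2) + ∑ k ∈ Finset.range (m + 1), b k := by
  intro m
  induction m with
  | zero => simpa [hb0] using ha0
  | succ n ih =>
    have hstep : logistic A (ξ ^ 2) (a n) ≤
        A / (1 + n * ξ ^ 2 + ξ ^ 2) + ∑ k ∈ Finset.range (n + 1), b k :=
      logistic_le_div_add_of_le_div_add hA (by positivity) (sq_nonneg ξ)
        (Finset.sum_nonneg fun k _ => hb k) (ha n) ih
    have hrec : a (n + 1) ≤ logistic A (ξ ^ 2) (a n) + b (n + 1) := hrec (n + 1) n.succ_pos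
    have hu : 1 + ((n + 1 : ℕ) : ℝ) * ξ ^ 2 = 1 + n * ξ ^ 2 + ξ ^ 2 := by push_cast; ring
    rw [Finset.sum_range_succ, hu]
    linarith

theorem stmt_0 (a b : ℕ → ℝ) (A ξ : ℝ) (hA : 0 < A) (hξ : 0 < ξ)
    (ha : ∀ m, 0 ≤ a m) (hb : ∀ m, 0 ≤ b m) (hb0 : b 0 = 0)
    (ha0 : a 0 ≤ A)
    (hrec : ∀ m : ℕ, 1 ≤ m → a m ≤ a (m - 1) * (1 - ξ ^ 2 * a (m - 1) / A) + b m) :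
    ∀ m : ℕ, a m ≤ A / (1 + (m : ℝ) * ξ ^ 2) + ∑ k ∈ Finset.range (m + 1), b k :=
  stmt_0_general a b A ξ hA ha hb hb0 ha0 hrec
end

section
/- Let A be an m×n real matrix and B an n×p real matrix. Then ∑_{j=1}^{n} σ_j(A)²·σ_j(B)² ≥ ‖AB‖_F² ≥ ∑_{j=1}^{n} σ_{n−j+1}(A)²·σ_j(B)², where σ_j denotes the j-th singular value in descending order (taken as zero beyond the rank/dimension) and ‖·‖_F is the Frobenius norm. -/
open Matrix

/-- Singular values of a real matrix, in descending order (`j`-th largest, `j : Fin n`),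
defined as square roots of the eigenvalues of `Aᴴ * A`. -/
noncomputable def sv {m n : ℕ} (A : Matrix (Fin m) (Fin n) ℝ) (j : Fin n) : ℝ :=
  Real.sqrt
    (((Matrix.isHermitian_conjTranspose_mul_self A).eigenvalues ∘
        Tuple.sort (Matrix.isHermitian_conjTranspose_mul_self A).eigenvalues) (Fin.rev j))

/-- Squared Frobenius norm. -/
def frobSq {a b : ℕ} (M : Matrix (Fin a) (Fin b) ℝ) : ℝ := ∑ i, ∑ j, M i j ^ 2

/-- Operator (spectral) norm: the largest singular value. -/
noncomputable def opNorm {a b : ℕ} (M : Matrix (Fin a) (Fin b) ℝ) : ℝ := ⨆ j, sv M j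

/-- Nuclear norm: the sum of the singular values. -/
noncomputable def nucNorm {a b : ℕ} (M : Matrix (Fin a) (Fin b) ℝ) : ℝ := ∑ j, sv M j

/-- Trace inner product `⟨A, B⟩ = tr(Aᵀ B)`. -/
def trInner {a b : ℕ} (A B : Matrix (Fin a) (Fin b) ℝ) : ℝ := (Aᵀ * B).trace


section RuheAux
open Matrix Finset
variable {n : ℕ}

lemma key_scalar {n : ℕ} (μ : Fin n → ℝ) (hμ : Antitone μ) (k : Fin n)
    (r : Fin n → ℝ) (hr0 : ∀ j, 0 ≤ r j) (hr1 : ∀ j, r j ≤ 1)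
    (hsum : ∑ j, r j = ∑ j, (if j ≤ k then (1:ℝ) else 0)) :
    ∑ j, μ j * r j ≤ ∑ j, μ j * (if j ≤ k then (1:ℝ) else 0) := by
  set e : Fin n → ℝ := fun j => if j ≤ k then (1:ℝ) else 0 with he
  have key : ∀ j, μ j * r j - μ j * e j ≤ μ k * r j - μ k * e j := by
    intro j
    have : (μ j - μ k) * (r j - e j) ≤ 0 := by
      rcases le_or_gt j k with h | h
      · apply mul_nonpos_of_nonneg_of_nonpos
        · exact sub_nonneg.2 (hμ h)
        · simp only [he, if_pos h]; linarith [hr1 j]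
      · apply mul_nonpos_of_nonpos_of_nonneg
        · exact sub_nonpos.2 (hμ h.le)
        · simp only [he, if_neg (not_le.2 h), sub_zero]; exact hr0 j
    nlinarith [this]
  have h2 : ∑ j, (μ j * r j - μ j * e j) ≤ ∑ j, (μ k * r j - μ k * e j) :=
    Finset.sum_le_sum (fun j _ => key j)
  rw [Finset.sum_sub_distrib, Finset.sum_sub_distrib, ← Finset.mul_sum, ← Finset.mul_sum,
    hsum] at h2
  have hsum' : ∑ j, μ j * e j = ∑ j, μ j * (if j ≤ k then (1:ℝ) else 0) := rfl
  linarith [h2]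

lemma layer_cake {n : ℕ} (f : ℕ → ℝ) (hfn : f n = 0) (i : Fin n) :
    f i = ∑ k : Fin n, (if i ≤ k then (1:ℝ) else 0) * (f k - f (k + 1)) := by
  have h1 : ∑ k : Fin n, (if i ≤ k then (1:ℝ) else 0) * (f k - f (k + 1))
      = ∑ k ∈ Finset.range n, (if (i:ℕ) ≤ k then (1:ℝ) else 0) * (f k - f (k + 1)) := by
    simp only [Fin.le_def]
    rw [Fin.sum_univ_eq_sum_range (fun k => (if (i:ℕ) ≤ k then (1:ℝ) else 0) * (f k - f (k+1)))]
  rw [h1]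
  have h2 : ∀ k ∈ Finset.range n, (if (i:ℕ) ≤ k then (1:ℝ) else 0) * (f k - f (k + 1))
      = if (i:ℕ) ≤ k then (f k - f (k+1)) else 0 := by
    intro k _; split <;> ring
  rw [Finset.sum_congr rfl h2, ← Finset.sum_filter]
  have h3 : (Finset.range n).filter (fun k => (i:ℕ) ≤ k) = Finset.Ico (i:ℕ) n := by
    ext k; simp [Finset.mem_Ico, and_comm]
  rw [h3, Finset.sum_Ico_eq_sub _ (le_of_lt i.isLt), Finset.sum_range_sub' f,
    Finset.sum_range_sub' f, hfn]
  ring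

lemma triple_subst (lam : Fin n → ℝ) (f : ℕ → ℝ) (hfn : f n = 0)
    (hfi : ∀ i : Fin n, f i = lam i) (F : Fin n → Fin n → ℝ) :
    ∑ i : Fin n, ∑ j : Fin n, lam i * F i j
      = ∑ k : Fin n, (f k - f ((k:ℕ) + 1)) * ∑ j : Fin n, ∑ i : Fin n, (if i ≤ k then (1:ℝ) else 0) * F i j := by
  calc ∑ i : Fin n, ∑ j : Fin n, lam i * F i j
      = ∑ i : Fin n, ∑ j : Fin n, ∑ k : Fin n, (f (k:ℕ) - f ((k:ℕ)+1)) * ((if i ≤ k then (1:ℝ) else 0) * F i j) := by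
        refine Finset.sum_congr rfl fun i _ => Finset.sum_congr rfl fun j _ => ?_
        rw [← hfi i, layer_cake f hfn i, Finset.sum_mul]
        exact Finset.sum_congr rfl fun k _ => by ring
    _ = ∑ k : Fin n, ∑ i : Fin n, ∑ j : Fin n, (f (k:ℕ) - f ((k:ℕ)+1)) * ((if i ≤ k then (1:ℝ) else 0) * F i j) := by
        exact (Finset.sum_congr rfl fun i _ => Finset.sum_comm).trans Finset.sum_comm
    _ = ∑ k : Fin n, (f (k:ℕ) - f ((k:ℕ)+1)) * ∑ j : Fin n, ∑ i : Fin n, (if i ≤ k then (1:ℝ) else 0) * F i j := by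
        refine Finset.sum_congr rfl fun k _ => ?_
        rw [Finset.mul_sum, Finset.sum_comm]
        exact Finset.sum_congr rfl fun i _ => by rw [Finset.mul_sum]

lemma ds_upper (lam μ : Fin n → ℝ) (hlam : Antitone lam) (hlam0 : ∀ i, 0 ≤ lam i)
    (hμ : Antitone μ) (S : Fin n → Fin n → ℝ) (hS0 : ∀ i j, 0 ≤ S i j)
    (hrow : ∀ i, ∑ j, S i j = 1) (hcol : ∀ j, ∑ i, S i j = 1) :
    ∑ i, ∑ j, lam i * (μ j * S i j) ≤ ∑ i, lam i * μ i := by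
  set f : ℕ → ℝ := fun t => if h : t < n then lam ⟨t, h⟩ else 0 with hf
  have hfn : f n = 0 := by simp [hf]
  have hfi : ∀ i : Fin n, f i = lam i := fun i => by simp [hf, i.isLt]
  have hd : ∀ k : Fin n, 0 ≤ f (k:ℕ) - f ((k:ℕ)+1) := by
    intro k
    rw [hfi k]
    by_cases h : (k:ℕ)+1 < n
    · have h2 : f ((k:ℕ)+1) = lam ⟨(k:ℕ)+1, h⟩ := by simp [hf, h]
      rw [h2]
      exact sub_nonneg.2 (hlam (by simp [Fin.le_def]))
    · have h2 : f ((k:ℕ)+1) = 0 := by simp [hf, h]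
      rw [h2, sub_zero]; exact hlam0 k
  have hL := triple_subst lam f hfn hfi (fun i j => μ j * S i j)
  have hR := triple_subst lam f hfn hfi (fun i j => μ j * (if j = i then (1:ℝ) else 0))
  have hRhs : ∑ i, ∑ j, lam i * (μ j * (if j = i then (1:ℝ) else 0)) = ∑ i, lam i * μ i := by
    refine Finset.sum_congr rfl fun i _ => ?_
    rw [Finset.sum_eq_single i (fun b _ hb => by simp [hb]) (by simp)]
    simp
  rw [hL, ← hRhs, hR]
  refine Finset.sum_le_sum fun k _ => ?_
  refine mul_le_mul_of_nonneg_left ?_ (hd k)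
  have hmid : ∑ j, ∑ i, (if i ≤ k then (1:ℝ) else 0) * (μ j * (if j = i then (1:ℝ) else 0))
      = ∑ j, μ j * (if j ≤ k then (1:ℝ) else 0) := by
    refine Finset.sum_congr rfl fun j _ => ?_
    rw [Finset.sum_eq_single j (fun b _ hb => by simp [Ne.symm hb]) (by simp)]
    simp [mul_comm]
  rw [hmid]
  have hform : ∑ j, ∑ i, (if i ≤ k then (1:ℝ) else 0) * (μ j * S i j)
      = ∑ j, μ j * ∑ i, (if i ≤ k then (1:ℝ) else 0) * S i j := by
    refine Finset.sum_congr rfl fun j _ => ?_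
    rw [Finset.mul_sum]
    exact Finset.sum_congr rfl fun i _ => by ring
  rw [hform]
  refine key_scalar μ hμ k _ (fun j => Finset.sum_nonneg fun i _ => ?_) (fun j => ?_) ?_
  · split <;> simp [hS0 i j]
  · calc ∑ i, (if i ≤ k then (1:ℝ) else 0) * S i j ≤ ∑ i, S i j := by
          refine Finset.sum_le_sum fun i _ => ?_
          split <;> simp [hS0 i j]
        _ = 1 := hcol j
  · rw [Finset.sum_comm]
    calc ∑ i, ∑ j, (if i ≤ k then (1:ℝ) else 0) * S i j
        = ∑ i, (if i ≤ k then (1:ℝ) else 0) * ∑ j, S i j := by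
          exact Finset.sum_congr rfl fun i _ => (Finset.mul_sum _ _ _).symm
      _ = ∑ j, (if j ≤ k then (1:ℝ) else 0) := by
          refine Finset.sum_congr rfl fun i _ => by rw [hrow i, mul_one]

lemma ds_upper' (lam μ : Fin n → ℝ) (hlam : Antitone lam)
    (hμ : Antitone μ) (S : Fin n → Fin n → ℝ) (hS0 : ∀ i j, 0 ≤ S i j)
    (hrow : ∀ i, ∑ j, S i j = 1) (hcol : ∀ j, ∑ i, S i j = 1) :
    ∑ i, ∑ j, lam i * (μ j * S i j) ≤ ∑ i, lam i * μ i := by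
  rcases eq_or_ne n 0 with h | h
  · subst h; simp
  obtain ⟨N, rfl⟩ : ∃ N, n = N + 1 := ⟨n - 1, (Nat.succ_pred_eq_of_ne_zero h).symm⟩
  set c := lam (Fin.last N) with hc
  set lam' : Fin (N+1) → ℝ := fun i => lam i - c with hlam'
  have hmu : ∑ i, ∑ j, (μ j * S i j) = ∑ j, μ j := by
    rw [Finset.sum_comm]
    refine Finset.sum_congr rfl fun j _ => ?_
    rw [← Finset.mul_sum, hcol j, mul_one]
  have h1 : ∑ i, ∑ j, lam i * (μ j * S i j)
      = (∑ i, ∑ j, lam' i * (μ j * S i j)) + c * ∑ j, μ j := by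
    rw [← hmu, Finset.mul_sum, ← Finset.sum_add_distrib]
    refine Finset.sum_congr rfl fun i _ => ?_
    rw [Finset.mul_sum, ← Finset.sum_add_distrib]
    exact Finset.sum_congr rfl fun j _ => by simp [hlam']; ring
  have h2 : ∑ i, lam i * μ i = (∑ i, lam' i * μ i) + c * ∑ j, μ j := by
    rw [Finset.mul_sum, ← Finset.sum_add_distrib]
    exact Finset.sum_congr rfl fun i _ => by simp [hlam']; ring
  have h3 := ds_upper lam' μ (fun a b hab => by simp [hlam']; exact hlam hab)
    (fun i => sub_nonneg.2 (hlam (Fin.le_last i))) hμ S hS0 hrow hcol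
  rw [h1, h2]
  linarith

lemma ds_lower (lam μ : Fin n → ℝ) (hlam : Antitone lam)
    (hμ : Antitone μ) (S : Fin n → Fin n → ℝ) (hS0 : ∀ i j, 0 ≤ S i j)
    (hrow : ∀ i, ∑ j, S i j = 1) (hcol : ∀ j, ∑ i, S i j = 1) :
    ∑ i, lam (Fin.rev i) * μ i ≤ ∑ i, ∑ j, lam i * (μ j * S i j) := by
  have h := ds_upper' (fun i => -lam (Fin.rev i)) μ
    (fun a b hab => by simp; exact hlam (Fin.rev_le_rev.2 hab))
    hμ (fun i j => S (Fin.rev i) j) (fun i j => hS0 _ j) (fun i => hrow _)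
    (fun j => by rw [← hcol j]; exact Fintype.sum_bijective Fin.rev Fin.rev_bijective _ _ (fun i => rfl))
  simp only [neg_mul, Finset.sum_neg_distrib] at h
  have hre : ∑ i, ∑ j, lam (Fin.rev i) * (μ j * S (Fin.rev i) j)
      = ∑ i, ∑ j, lam i * (μ j * S i j) :=
    Fintype.sum_bijective Fin.rev Fin.rev_bijective _ _ (fun i => rfl)
  rw [hre] at h
  linarith

lemma exists_ds {n : ℕ} {H K : Matrix (Fin n) (Fin n) ℝ} (hH : H.IsHermitian) (hK : K.IsHermitian) :
    ∃ S : Fin n → Fin n → ℝ, (∀ i j, 0 ≤ S i j) ∧ (∀ i, ∑ j, S i j = 1) ∧ (∀ j, ∑ i, S i j = 1) ∧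
      (H * K).trace = ∑ i, ∑ j, hH.eigenvalues i * (hK.eigenvalues j * S i j) := by
  set U : Matrix (Fin n) (Fin n) ℝ := (hH.eigenvectorUnitary : Matrix (Fin n) (Fin n) ℝ) with hU
  set V : Matrix (Fin n) (Fin n) ℝ := (hK.eigenvectorUnitary : Matrix (Fin n) (Fin n) ℝ) with hV
  set W : Matrix (Fin n) (Fin n) ℝ := star U * V with hW
  set D : Matrix (Fin n) (Fin n) ℝ := diagonal (RCLike.ofReal ∘ hH.eigenvalues) with hD
  set E : Matrix (Fin n) (Fin n) ℝ := diagonal (RCLike.ofReal ∘ hK.eigenvalues) with hE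
  have hUU : star U * U = 1 := Matrix.mem_unitaryGroup_iff'.mp hH.eigenvectorUnitary.2
  have hUU' : U * star U = 1 := Matrix.mem_unitaryGroup_iff.mp hH.eigenvectorUnitary.2
  have hVV : star V * V = 1 := Matrix.mem_unitaryGroup_iff'.mp hK.eigenvectorUnitary.2
  have hVV' : V * star V = 1 := Matrix.mem_unitaryGroup_iff.mp hK.eigenvectorUnitary.2
  have hWW : W * star W = 1 := by
    rw [hW, StarMul.star_mul, star_star, Matrix.mul_assoc, ← Matrix.mul_assoc V, hVV', Matrix.one_mul, hUU]
  have hWW' : star W * W = 1 := by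
    rw [hW, StarMul.star_mul, star_star, Matrix.mul_assoc, ← Matrix.mul_assoc U, hUU', Matrix.one_mul, hVV]
  refine ⟨fun i j => (W i j)^2, fun i j => sq_nonneg _, fun i => ?_, fun j => ?_, ?_⟩
  · have := congrArg (fun M => M i i) hWW
    simpa [Matrix.mul_apply, Matrix.conjTranspose_apply, pow_two] using this
  · have := congrArg (fun M => M j j) hWW'
    simpa [Matrix.mul_apply, Matrix.conjTranspose_apply, pow_two, mul_comm] using this
  · have e1 : H * K = U * (D * W * E * star V) := by
      nth_rewrite 1 [hH.spectral_theorem, hK.spectral_theorem]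
      simp only [Unitary.conjStarAlgAut_apply, ← hU, ← hV, ← hD, ← hE, hW, Matrix.mul_assoc]
    have e2 : (H * K).trace = (D * W * E * star W).trace := by
      rw [e1, Matrix.trace_mul_comm]
      congr 1
      rw [hW, StarMul.star_mul, star_star]
      simp only [Matrix.mul_assoc]
    rw [e2]
    have e3 : ∀ i, (D * W * E * star W) i i
        = hH.eigenvalues i * ∑ j, W i j * (hK.eigenvalues j * W i j) := by
      intro i
      have : D * W * E * star W = D * (W * E * star W) := by simp only [Matrix.mul_assoc]
      rw [this, hD, Matrix.diagonal_mul]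
      simp only [Function.comp_apply, RCLike.ofReal_real_eq_id, id]
      congr 1
      rw [Matrix.mul_apply]
      refine Finset.sum_congr rfl fun j _ => ?_
      rw [Matrix.mul_apply]
      rw [Finset.sum_eq_single j (fun b _ hb => by simp [hE, Matrix.diagonal_apply, hb]) (by simp)]
      simp [hE, Matrix.diagonal_apply, Matrix.conjTranspose_apply, mul_comm, mul_assoc]
    rw [Matrix.trace]
    simp only [Matrix.diag]
    rw [Finset.sum_congr rfl (fun i _ => e3 i)]
    refine Finset.sum_congr rfl fun i _ => ?_
    rw [Finset.mul_sum]
    exact Finset.sum_congr rfl fun j _ => by ring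

end RuheAux
open Finset

/-- Ruhe's inequality. The singular values of B are those of its transpose
(an p-by-n matrix, with n singular values). -/
theorem stmt_6 {m n p : ℕ} (A : Matrix (Fin m) (Fin n) ℝ) (B : Matrix (Fin n) (Fin p) ℝ) :
    (∑ j : Fin n, sv A j ^ 2 * sv Bᵀ j ^ 2) ≥ frobSq (A * B) ∧
    frobSq (A * B) ≥ ∑ j : Fin n, sv A (Fin.rev j) ^ 2 * sv Bᵀ j ^ 2 := by
  set hH := Matrix.isHermitian_conjTranspose_mul_self A with hHdef
  set hK := Matrix.isHermitian_conjTranspose_mul_self Bᵀ with hKdef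
  -- frobSq (A*B) as a trace
  have hfrob : frobSq (A * B) = ((Aᴴ * A) * ((Bᵀ)ᴴ * Bᵀ)).trace := by
    have h1 : (Bᵀ)ᴴ * Bᵀ = B * Bᴴ := by
      rw [conjTranspose_eq_transpose_of_trivial, transpose_transpose,
        conjTranspose_eq_transpose_of_trivial]
    have h2 : ((A*B)ᴴ * (A*B)).trace = ((Aᴴ * A) * (B * Bᴴ)).trace := by
      rw [conjTranspose_mul, Matrix.mul_assoc, Matrix.trace_mul_comm]
      simp only [Matrix.mul_assoc]
    have h3 : frobSq (A*B) = ((A*B)ᴴ * (A*B)).trace := by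
      simp only [frobSq, Matrix.trace, Matrix.diag, Matrix.mul_apply,
        Matrix.conjTranspose_apply, star_trivial, pow_two]
      rw [Finset.sum_comm]
    rw [h3, h2, h1]
  obtain ⟨S, hS0, hrow, hcol, htr⟩ := exists_ds hH hK
  set σ := Tuple.sort hH.eigenvalues with hσ
  set τ := Tuple.sort hK.eigenvalues with hτ
  set lam : Fin n → ℝ := fun i => hH.eigenvalues (σ (Fin.rev i)) with hlamdef
  set mu : Fin n → ℝ := fun i => hK.eigenvalues (τ (Fin.rev i)) with hmudef
  have hlam : Antitone lam := fun a b hab =>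
    Tuple.monotone_sort hH.eigenvalues (Fin.rev_le_rev.mpr hab)
  have hmu : Antitone mu := fun a b hab =>
    Tuple.monotone_sort hK.eigenvalues (Fin.rev_le_rev.mpr hab)
  set ρ : Fin n ≃ Fin n := Fin.revPerm.trans σ with hρ
  set θ : Fin n ≃ Fin n := Fin.revPerm.trans τ with hθ
  set S' : Fin n → Fin n → ℝ := fun i j => S (ρ i) (θ j) with hS'
  have hS0' : ∀ i j, 0 ≤ S' i j := fun i j => hS0 _ _
  have hrow' : ∀ i, ∑ j, S' i j = 1 := fun i => by
    rw [hS']; rw [Equiv.sum_comp θ (fun j => S (ρ i) j)]; exact hrow _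
  have hcol' : ∀ j, ∑ i, S' i j = 1 := fun j => by
    rw [hS']; rw [Equiv.sum_comp ρ (fun i => S i (θ j))]; exact hcol _
  have htr' : frobSq (A * B) = ∑ i, ∑ j, lam i * (mu j * S' i j) := by
    rw [hfrob, htr]
    rw [← Equiv.sum_comp ρ (fun i => ∑ j, hH.eigenvalues i * (hK.eigenvalues j * S i j))]
    refine Finset.sum_congr rfl fun i _ => ?_
    rw [← Equiv.sum_comp θ (fun j => hH.eigenvalues (ρ i) * (hK.eigenvalues j * S (ρ i) j))]
    rfl
  have hsvA : ∀ j, sv A j ^ 2 = lam j := fun j => by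
    rw [sv, Real.sq_sqrt]
    · rfl
    · exact Matrix.eigenvalues_conjTranspose_mul_self_nonneg A _
  have hsvB : ∀ j, sv Bᵀ j ^ 2 = mu j := fun j => by
    rw [sv, Real.sq_sqrt]
    · rfl
    · exact Matrix.eigenvalues_conjTranspose_mul_self_nonneg Bᵀ _
  constructor
  · rw [htr', ge_iff_le]
    calc ∑ i, ∑ j, lam i * (mu j * S' i j) ≤ ∑ i, lam i * mu i :=
          ds_upper' lam mu hlam hmu S' hS0' hrow' hcol'
      _ = ∑ j : Fin n, sv A j ^ 2 * sv Bᵀ j ^ 2 :=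
          Finset.sum_congr rfl fun j _ => by rw [hsvA j, hsvB j]
  · rw [htr', ge_iff_le]
    calc ∑ j : Fin n, sv A (Fin.rev j) ^ 2 * sv Bᵀ j ^ 2 = ∑ i, lam (Fin.rev i) * mu i :=
          Finset.sum_congr rfl fun j _ => by rw [hsvA _, hsvB j]
      _ ≤ ∑ i, ∑ j, lam i * (mu j * S' i j) :=
          ds_lower lam mu hlam hmu S' hS0' hrow' hcol'
end

section
/- For any real matrices M and N of the same dimensions, |tr(MᵀN)| ≤ ‖M‖_op · ‖N‖_*, where ‖M‖_op is the largest singular value of M and ‖N‖_* is the sum of the singular values of N. -/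
open Matrix

lemma sv_le_opNorm {a b : ℕ} (M : Matrix (Fin a) (Fin b) ℝ) (j : Fin b) :
    sv M j ≤ opNorm M :=
  le_ciSup (Set.Finite.bddAbove (Set.finite_range _)) j

lemma opNorm_nonneg' {a b : ℕ} (M : Matrix (Fin a) (Fin b) ℝ) (j : Fin b) :
    0 ≤ opNorm M :=
  le_trans (Real.sqrt_nonneg _) (sv_le_opNorm M j)

lemma eig_le_opNorm_sq {a b : ℕ} (M : Matrix (Fin a) (Fin b) ℝ) (i : Fin b) :
    (Matrix.isHermitian_conjTranspose_mul_self M).eigenvalues i ≤ opNorm M ^ 2 := by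
  set σ := Tuple.sort (Matrix.isHermitian_conjTranspose_mul_self M).eigenvalues with hσ
  have h0 := Matrix.eigenvalues_conjTranspose_mul_self_nonneg M i
  have hsv : sv M (Fin.rev (σ.symm i)) =
      Real.sqrt ((Matrix.isHermitian_conjTranspose_mul_self M).eigenvalues i) := by
    simp [sv, ← hσ, Fin.rev_rev]
  calc (Matrix.isHermitian_conjTranspose_mul_self M).eigenvalues i
      = (sv M (Fin.rev (σ.symm i))) ^ 2 := by rw [hsv, Real.sq_sqrt h0]
    _ ≤ opNorm M ^ 2 := pow_le_pow_left₀ (Real.sqrt_nonneg _) (sv_le_opNorm M _) 2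

lemma quad_le {a b : ℕ} (M : Matrix (Fin a) (Fin b) ℝ) (v : Fin b → ℝ) :
    v ⬝ᵥ ((Mᴴ * M) *ᵥ v) ≤ opNorm M ^ 2 * (v ⬝ᵥ v) := by
  have hB := Matrix.isHermitian_conjTranspose_mul_self M
  set W : Matrix (Fin b) (Fin b) ℝ := (hB.eigenvectorUnitary : Matrix (Fin b) (Fin b) ℝ) with hW
  have hspec : Mᴴ * M = W * diagonal (hB.eigenvalues) * star W := by
    have := hB.spectral_theorem
    simpa [RCLike.ofReal_real_eq_id, hW] using this
  have hWW : W * star W = 1 := Matrix.mem_unitaryGroup_iff.mp hB.eigenvectorUnitary.2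
  have hsW : star W = Wᵀ := (W.star_eq_conjTranspose).trans (W.conjTranspose_eq_transpose_of_trivial)
  set w : Fin b → ℝ := star W *ᵥ v with hw
  have hvW : v ᵥ* W = w := by rw [hw, hsW, mulVec_transpose]
  have h1 : v ⬝ᵥ ((Mᴴ * M) *ᵥ v) = w ⬝ᵥ (diagonal hB.eigenvalues *ᵥ w) := by
    conv_lhs => rw [hspec]
    rw [← mulVec_mulVec, ← mulVec_mulVec, dotProduct_mulVec, hvW]
  have hww : w ⬝ᵥ w = v ⬝ᵥ v := by
    show w ⬝ᵥ (star W *ᵥ v) = v ⬝ᵥ v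
    rw [dotProduct_mulVec, hsW, vecMul_transpose]
    show (W *ᵥ (star W *ᵥ v)) ⬝ᵥ v = v ⬝ᵥ v
    rw [mulVec_mulVec, hWW, one_mulVec]
  rw [h1, ← hww]
  have h2 : w ⬝ᵥ (diagonal hB.eigenvalues *ᵥ w) = ∑ i, w i * (hB.eigenvalues i * w i) := by
    simp [dotProduct, mulVec_diagonal]
  rw [h2, dotProduct, Finset.mul_sum]
  apply Finset.sum_le_sum
  intro i _
  have := eig_le_opNorm_sq M i
  nlinarith [sq_nonneg (w i)]

theorem stmt_9 {a b : ℕ} (M N : Matrix (Fin a) (Fin b) ℝ) :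
    |(Mᵀ * N).trace| ≤ opNorm M * nucNorm N := by
  have hA := Matrix.isHermitian_conjTranspose_mul_self N
  set V : Matrix (Fin b) (Fin b) ℝ := (hA.eigenvectorUnitary : Matrix (Fin b) (Fin b) ℝ) with hV
  have hspec : Nᴴ * N = V * diagonal (hA.eigenvalues) * star V := by
    have := hA.spectral_theorem
    simpa [RCLike.ofReal_real_eq_id, hV] using this
  have hVV : V * star V = 1 := Matrix.mem_unitaryGroup_iff.mp hA.eigenvectorUnitary.2
  have hVV' : star V * V = 1 := Matrix.mem_unitaryGroup_iff'.mp hA.eigenvectorUnitary.2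
  have hsV : star V = Vᵀ := (V.star_eq_conjTranspose).trans (V.conjTranspose_eq_transpose_of_trivial)
  have hVVt : V * Vᵀ = 1 := by rw [← hsV]; exact hVV
  have hVtV : Vᵀ * V = 1 := by rw [← hsV]; exact hVV'
  -- trace identity
  have htr : (Mᵀ * N).trace = ((M * V)ᵀ * (N * V)).trace := by
    have hX : (M * V)ᵀ * (N * V) = Vᵀ * (Mᵀ * N) * V := by
      simp only [transpose_mul, Matrix.mul_assoc]
    rw [hX, Matrix.trace_mul_cycle, ← Matrix.mul_assoc, hVVt, Matrix.one_mul]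
  have hentry : ((M * V)ᵀ * (N * V)).trace = ∑ j, ∑ i, (M * V) i j * (N * V) i j := by
    simp [Matrix.trace, Matrix.diag, mul_apply, mul_comm]
  -- diagonalization of (NV)ᵀ(NV)
  have hD : (N * V)ᵀ * (N * V) = diagonal hA.eigenvalues := by
    have h1 : (N * V)ᵀ * (N * V) = star V * ((Nᴴ * N) * V) := by
      rw [hsV, N.conjTranspose_eq_transpose_of_trivial]
      simp only [transpose_mul, Matrix.mul_assoc]
    rw [h1]
    conv_lhs => rw [hspec]
    calc star V * (V * diagonal hA.eigenvalues * star V * V)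
        = (star V * V) * diagonal hA.eigenvalues * (star V * V) := by
          simp only [Matrix.mul_assoc]
      _ = diagonal hA.eigenvalues := by rw [hVV', Matrix.mul_one, Matrix.one_mul]
  have hcN : ∀ j, (∑ i, (N * V) i j * (N * V) i j) = hA.eigenvalues j := by
    intro j
    have := congrFun (congrFun hD j) j
    simpa [mul_apply, diagonal_apply_eq, mul_comm] using this
  -- column norm bound for M
  have hcM : ∀ j : Fin b, (∑ i, (M * V) i j * (M * V) i j) ≤ opNorm M ^ 2 := by
    intro j
    set v : Fin b → ℝ := fun k => V k j with hv
    have h1 : M *ᵥ v = fun i => (M * V) i j := by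
      ext i; simp [mulVec, dotProduct, mul_apply, hv]
    have h2 : v ⬝ᵥ ((Mᴴ * M) *ᵥ v) = (M *ᵥ v) ⬝ᵥ (M *ᵥ v) := by
      rw [← mulVec_mulVec, dotProduct_mulVec, M.conjTranspose_eq_transpose_of_trivial,
        vecMul_transpose]
    have h3 : v ⬝ᵥ v = 1 := by
      have := congrFun (congrFun hVtV j) j
      simpa [mul_apply, one_apply, dotProduct] using this
    have h4 := quad_le M v
    rw [h2, h3, mul_one] at h4
    calc (∑ i, (M * V) i j * (M * V) i j) = (M *ᵥ v) ⬝ᵥ (M *ᵥ v) := by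
          rw [h1]; rfl
      _ ≤ opNorm M ^ 2 := h4
  -- per-column Cauchy-Schwarz
  have hCS : ∀ j : Fin b, |∑ i, (M * V) i j * (N * V) i j| ≤
      opNorm M * Real.sqrt (hA.eigenvalues j) := by
    intro j
    have cs := Finset.sum_mul_sq_le_sq_mul_sq Finset.univ (fun i => (M * V) i j)
      (fun i => (N * V) i j)
    simp only [← pow_two] at *
    have habs : |∑ i, (M * V) i j * (N * V) i j| ≤
        Real.sqrt (∑ i, (M * V) i j ^ 2) * Real.sqrt (∑ i, (N * V) i j ^ 2) := by
      rw [← Real.sqrt_sq_eq_abs, ← Real.sqrt_mul (Finset.sum_nonneg fun i _ => sq_nonneg _)]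
      exact Real.sqrt_le_sqrt cs
    refine habs.trans (mul_le_mul ?_ ?_ (Real.sqrt_nonneg _) (opNorm_nonneg' M j))
    · have := hcM j
      calc Real.sqrt (∑ i, (M * V) i j ^ 2) ≤ Real.sqrt (opNorm M ^ 2) :=
            Real.sqrt_le_sqrt this
        _ = opNorm M := Real.sqrt_sq (opNorm_nonneg' M j)
    · have := hcN j
      rw [this]
  -- sum of sqrt eigenvalues = nuclear norm
  have hnuc : nucNorm N = ∑ i, Real.sqrt (hA.eigenvalues i) := by
    rw [nucNorm, ← Equiv.sum_comp (Fin.revPerm.trans (Tuple.sort hA.eigenvalues))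
      (fun i => Real.sqrt (hA.eigenvalues i))]
    apply Finset.sum_congr rfl
    intro j _
    simp [sv, Equiv.trans_apply]
  calc |(Mᵀ * N).trace| = |∑ j, ∑ i, (M * V) i j * (N * V) i j| := by rw [htr, hentry]
    _ ≤ ∑ j, |∑ i, (M * V) i j * (N * V) i j| := Finset.abs_sum_le_sum_abs _ _
    _ ≤ ∑ j, opNorm M * Real.sqrt (hA.eigenvalues j) :=
        Finset.sum_le_sum fun j _ => hCS j
    _ = opNorm M * nucNorm N := by rw [hnuc, Finset.mul_sum]
end

section
/- Let H be a real inner product space, Ỹ, G, Z ∈ H with Z ≠ G, and suppose ⟨Ỹ − G, Z − G⟩ ≥ τ‖Ỹ − G‖² for some τ > 0 and ‖Z − G‖² ≤ C for some C > 0. Then with λ = ⟨Ỹ − G, Z − G⟩/‖Z − G‖², one has ‖Ỹ − G − λ(Z − G)‖² ≤ ‖Ỹ − G‖²·(1 − τ²‖Ỹ − G‖²/C). -/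
open RealInnerProductSpace

theorem stmt_14 {H : Type*} [NormedAddCommGroup H] [InnerProductSpace ℝ H]
    (Yt G Z : H) (hZG : Z ≠ G) (τ C : ℝ) (hτ : 0 < τ) (hC : 0 < C)
    (hinner : τ * ‖Yt - G‖ ^ 2 ≤ ⟪Yt - G, Z - G⟫)
    (hstep : ‖Z - G‖ ^ 2 ≤ C) (lam : ℝ)
    (hlam : lam = ⟪Yt - G, Z - G⟫ / ‖Z - G‖ ^ 2) :
    ‖Yt - G - lam • (Z - G)‖ ^ 2
      ≤ ‖Yt - G‖ ^ 2 * (1 - τ ^ 2 * ‖Yt - G‖ ^ 2 / C) := by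
  set a := Yt - G
  set b := Z - G
  have hb : b ≠ 0 := sub_ne_zero.mpr hZG
  have hnb : (0:ℝ) < ‖b‖ ^ 2 := by
    have := norm_pos_iff.mpr hb
    positivity
  have hna : (0:ℝ) ≤ ‖a‖ ^ 2 := by positivity
  have hip : τ * ‖a‖ ^ 2 ≤ ⟪a, b⟫ := hinner
  have hip0 : (0:ℝ) ≤ ⟪a, b⟫ := le_trans (by positivity) hip
  -- expand the square
  have hexp : ‖a - lam • b‖ ^ 2 = ‖a‖ ^ 2 - ⟪a, b⟫ ^ 2 / ‖b‖ ^ 2 := by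
    have h1 : ‖a - lam • b‖ ^ 2
        = ‖a‖ ^ 2 - 2 * lam * ⟪a, b⟫ + lam ^ 2 * ‖b‖ ^ 2 := by
      rw [@norm_sub_sq_real]
      rw [real_inner_smul_right, norm_smul]
      ring_nf
      rw [Real.norm_eq_abs, sq_abs]
    rw [h1, hlam]
    field_simp
    ring
  rw [hexp]
  have key : τ ^ 2 * ‖a‖ ^ 2 * ‖a‖ ^ 2 / C ≤ ⟪a, b⟫ ^ 2 / ‖b‖ ^ 2 := by
    have h2 : τ ^ 2 * ‖a‖ ^ 2 * ‖a‖ ^ 2 ≤ ⟪a, b⟫ ^ 2 := by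
      have := mul_self_le_mul_self (by positivity : (0:ℝ) ≤ τ * ‖a‖ ^ 2) hip
      nlinarith
    calc τ ^ 2 * ‖a‖ ^ 2 * ‖a‖ ^ 2 / C ≤ ⟪a, b⟫ ^ 2 / C := by gcongr
      _ ≤ ⟪a, b⟫ ^ 2 / ‖b‖ ^ 2 := by gcongr
  have hrw : ‖a‖ ^ 2 * (1 - τ ^ 2 * ‖a‖ ^ 2 / C)
      = ‖a‖ ^ 2 - τ ^ 2 * ‖a‖ ^ 2 * ‖a‖ ^ 2 / C := by ring
  linarith [key]
end
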